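/- Let Λ = Σ_{r=1}^q π_r·W_r be a convex combination of matrices. If ρ(Σ_r π_r·(W_r ⊗ W_r)) < 1, then ρ(Λ) < 1. -/

import Mathlib

/-!
Let `μ` be an eigenvalue of `Λ` with `|μ| ≥ 1` and eigenvector `v`, and let
`T X = Σ_r π_r W_r X W_rᴴ` be the second-moment map of the jump linear system.
The variance identity `T X = Λ X Λᴴ + Σ_r π_r (W_r - Λ) X (W_r - Λ)ᴴ` gives `Λ X Λᴴ ≤ T X` in the
Loewner order for `X ≥ 0` (Jensen), hence `Tᵏ (v vᴴ) ≥ Λᵏ v vᴴ (Λᵏ)ᴴ = |μ|²ᵏ v vᴴ`, so the diagonal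
of `Tᵏ (v vᴴ)` stays away from zero. On the other hand, vectorising turns `T` into
`Σ_r π_r W_r ⊗ W_r`, whose powers tend to zero by Gelfand's formula since its spectral radius is
below one.
-/

open Matrix

open scoped Kronecker

/-- The spectral radius of a real square matrix. -/
noncomputable def specRad {d : Type*} [Fintype d] [DecidableEq d] (M : Matrix d d ℝ) : ℝ :=
  sSup {x : ℝ | ∃ μ : ℂ, (M.map (Complex.ofReal)).charpoly.IsRoot μ ∧ x = ‖μ‖}

open Filter Topology
open scoped ComplexOrder MatrixOrder

section SpectralRadius

variable {n : Type*} [Fintype n] [DecidableEq n]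

theorem specRad_eq_sSup_image_spectrum (M : Matrix n n ℝ) :
    specRad M = sSup ((‖·‖) '' spectrum ℂ (M.map Complex.ofReal)) := by
  simp only [specRad, ← mem_spectrum_iff_isRoot_charpoly, Set.image, eq_comm]

theorem norm_le_specRad {M : Matrix n n ℝ} {μ : ℂ} (hμ : μ ∈ spectrum ℂ (M.map Complex.ofReal)) :
    ‖μ‖ ≤ specRad M := by
  rw [specRad_eq_sSup_image_spectrum]
  exact le_csSup ((finite_spectrum _).image _).bddAbove ⟨μ, hμ, rfl⟩

theorem specRad_lt_of_forall_norm_lt {M : Matrix n n ℝ} {r : ℝ} (hr : 0 < r)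
    (h : ∀ μ ∈ spectrum ℂ (M.map Complex.ofReal), ‖μ‖ < r) : specRad M < r := by
  rw [specRad_eq_sSup_image_spectrum]
  rcases ((spectrum ℂ (M.map Complex.ofReal)).image (‖·‖)).eq_empty_or_nonempty with hemp | hne
  · rwa [hemp, Real.sSup_empty]
  · obtain ⟨μ, hμ, hμ_eq⟩ := hne.csSup_mem ((finite_spectrum _).image _)
    exact hμ_eq ▸ h μ hμ

theorem spectralRadius_map_ofReal_le_specRad (M : Matrix n n ℝ) :
    spectralRadius ℂ (M.map Complex.ofReal) ≤ ENNReal.ofReal (specRad M) :=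
  iSup₂_le fun μ hμ =>
    (ENNReal.ofReal_eq_coe_nnreal (norm_nonneg μ)).ge.trans
      (ENNReal.ofReal_le_ofReal (norm_le_specRad hμ))

theorem tendsto_pow_atTop_nhds_zero_of_spectralRadius_lt_one {A : Type*} [NormedRing A]
    [NormedAlgebra ℂ A] [CompleteSpace A] {a : A} (ha : spectralRadius ℂ a < 1) :
    Tendsto (a ^ ·) atTop (𝓝 0) := by
  obtain ⟨r, har, hr1⟩ := ENNReal.lt_iff_exists_nnreal_btwn.mp ha
  have hev : ∀ᶠ k : ℕ in atTop, ‖a ^ k‖ ≤ (r : ℝ) ^ k := by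
    filter_upwards [(spectrum.pow_nnnorm_pow_one_div_tendsto_nhds_spectralRadius a).eventually
      (gt_mem_nhds har), eventually_gt_atTop 0] with k hk hk0
    rw [one_div, ENNReal.rpow_inv_lt_iff (by positivity), ENNReal.rpow_natCast] at hk
    exact_mod_cast hk.le
  exact squeeze_zero_norm' hev (tendsto_pow_atTop_nhds_zero_of_lt_one r.2 (mod_cast hr1))

theorem tendsto_pow_atTop_nhds_zero_of_specRad_lt_one {M : Matrix n n ℝ} (hM : specRad M < 1) :
    Tendsto (M.map Complex.ofReal ^ ·) atTop (𝓝 0) := by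
  let : NormedRing (Matrix n n ℂ) := Matrix.linftyOpNormedRing
  let : NormedAlgebra ℂ (Matrix n n ℂ) := Matrix.linftyOpNormedAlgebra
  exact tendsto_pow_atTop_nhds_zero_of_spectralRadius_lt_one <|
    (spectralRadius_map_ofReal_le_specRad M).trans_lt (ENNReal.ofReal_lt_one.mpr hM)

end SpectralRadius

namespace Matrix

variable {n : Type*} [Fintype n]

theorem exists_mulVec_eq_smul_of_mem_spectrum [DecidableEq n] {K : Type*} [Field K]
    {A : Matrix n n K} {μ : K} (hμ : μ ∈ spectrum K A) : ∃ v, v ≠ 0 ∧ A *ᵥ v = μ • v := by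
  rw [← spectrum_toLin', ← Module.End.hasEigenvalue_iff_mem_spectrum] at hμ
  obtain ⟨v, hv⟩ := hμ.exists_hasEigenvector
  exact ⟨v, hv.2, by simpa using hv.apply_eq_smul⟩

theorem pow_mulVec_eq_pow_smul [DecidableEq n] {R : Type*} [CommRing R] {A : Matrix n n R}
    {v : n → R} {μ : R} (hv : A *ᵥ v = μ • v) (k : ℕ) : A ^ k *ᵥ v = μ ^ k • v := by
  induction k with
  | zero => simp
  | succ k ih => rw [pow_succ, ← mulVec_mulVec, hv, mulVec_smul, ih, smul_smul, pow_succ']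

theorem mul_vecMulVec_star_mul_conjTranspose {R : Type*} [CommRing R] [StarRing R]
    (A : Matrix n n R) (v : n → R) :
    A * vecMulVec v (star v) * Aᴴ = vecMulVec (A *ᵥ v) (star (A *ᵥ v)) := by
  rw [mul_vecMulVec, vecMulVec_mul, star_mulVec]

end Matrix

section SecondMoment

variable {𝕜 ι n : Type*} [RCLike 𝕜] [Fintype ι] [Fintype n]

/-- If `x` has second moment `X = E[x xᴴ]` and `r` is drawn with law `π` independently of `x`,
then `W_r x` has second moment `secondMoment π W X`. -/
def secondMoment (π : ι → ℝ) (W : ι → Matrix n n 𝕜) (X : Matrix n n 𝕜) : Matrix n n 𝕜 :=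
  ∑ r, π r • (W r * X * (W r)ᴴ)

theorem secondMoment_eq_add_secondMoment_sub_mean (π : ι → ℝ) (hπ : ∑ r, π r = 1)
    (W : ι → Matrix n n 𝕜) (X : Matrix n n 𝕜) :
    secondMoment π W X = (∑ r, π r • W r) * X * (∑ r, π r • W r)ᴴ
      + secondMoment π (fun r => W r - ∑ s, π s • W s) X := by
  set Λ := ∑ s, π s • W s
  have hleft : ∑ r, π r • (W r * X * Λᴴ) = Λ * X * Λᴴ := by
    simp only [Λ, Finset.sum_mul, smul_mul_assoc]
  have hright : ∑ r, π r • (Λ * X * (W r)ᴴ) = Λ * X * Λᴴ := by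
    simp only [Λ, conjTranspose_sum, conjTranspose_smul, star_trivial, Finset.mul_sum,
      mul_smul_comm]
  have hconst : ∑ r, π r • (Λ * X * Λᴴ) = Λ * X * Λᴴ := by
    rw [← Finset.sum_smul, hπ, one_smul]
  have hexpand : ∀ r, (W r - Λ) * X * (W r - Λ)ᴴ
      = W r * X * (W r)ᴴ - W r * X * Λᴴ - Λ * X * (W r)ᴴ + Λ * X * Λᴴ := fun r => by
    rw [conjTranspose_sub]; noncomm_ring
  simp only [secondMoment, hexpand, smul_add, smul_sub, Finset.sum_add_distrib,
    Finset.sum_sub_distrib, hleft, hright, hconst]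
  abel

variable [DecidableEq n]

theorem secondMoment_nonneg {π : ι → ℝ} (hπ : ∀ r, 0 ≤ π r) (W : ι → Matrix n n 𝕜)
    {X : Matrix n n 𝕜} (hX : 0 ≤ X) : 0 ≤ secondMoment π W X :=
  Finset.sum_nonneg fun r _ => smul_nonneg (hπ r) <| by
    simpa only [star_eq_conjTranspose] using star_right_conjugate_nonneg hX (W r)

theorem mean_conj_le_secondMoment {π : ι → ℝ} (hπ0 : ∀ r, 0 ≤ π r) (hπ1 : ∑ r, π r = 1)
    (W : ι → Matrix n n 𝕜) {X : Matrix n n 𝕜} (hX : 0 ≤ X) :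
    (∑ r, π r • W r) * X * (∑ r, π r • W r)ᴴ ≤ secondMoment π W X := by
  rw [secondMoment_eq_add_secondMoment_sub_mean π hπ1]
  exact le_add_of_nonneg_right (secondMoment_nonneg hπ0 _ hX)

theorem mean_pow_conj_le_secondMoment_iterate {π : ι → ℝ} (hπ0 : ∀ r, 0 ≤ π r)
    (hπ1 : ∑ r, π r = 1) (W : ι → Matrix n n 𝕜) (k : ℕ) {X : Matrix n n 𝕜} (hX : 0 ≤ X) :
    (∑ r, π r • W r) ^ k * X * ((∑ r, π r • W r) ^ k)ᴴ ≤ (secondMoment π W)^[k] X := by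
  induction k generalizing X with
  | zero => simp
  | succ k ih =>
    set Λ := ∑ r, π r • W r
    calc Λ ^ (k + 1) * X * (Λ ^ (k + 1))ᴴ = Λ ^ k * (Λ * X * Λᴴ) * (Λ ^ k)ᴴ := by
          rw [pow_succ, conjTranspose_mul]; noncomm_ring
      _ ≤ Λ ^ k * secondMoment π W X * (Λ ^ k)ᴴ := by
          simpa only [star_eq_conjTranspose] using
            star_right_conjugate_le_conjugate (mean_conj_le_secondMoment hπ0 hπ1 W hX) (Λ ^ k)
      _ ≤ (secondMoment π W)^[k + 1] X := by
          rw [Function.iterate_succ_apply]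
          exact ih (secondMoment_nonneg hπ0 W hX)

end SecondMoment

section Vectorization

variable {ι n : Type*} [Fintype ι] [Fintype n]

theorem vec_secondMoment_map_ofReal (π : ι → ℝ) (W : ι → Matrix n n ℝ) (X : Matrix n n ℂ) :
    vec (secondMoment π (fun r => (W r).map Complex.ofReal) X)
      = (∑ r, π r • (W r ⊗ₖ W r)).map Complex.ofReal *ᵥ vec X := by
  have hconj : ∀ r, ((W r).map Complex.ofReal)ᴴ = ((W r).map Complex.ofReal)ᵀ := fun r => by
    ext i j; simp
  have hmap : (∑ r, π r • (W r ⊗ₖ W r)).map Complex.ofReal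
      = ∑ r, π r • ((W r).map Complex.ofReal ⊗ₖ (W r).map Complex.ofReal) := by
    ext p p'; simp [Matrix.sum_apply, kroneckerMap_apply]
  simp only [secondMoment, hconj, hmap, vec_sum, vec_smul, sum_mulVec, smul_mulVec,
    kronecker_mulVec_vec]

variable [DecidableEq n]

theorem vec_secondMoment_iterate_map_ofReal (π : ι → ℝ) (W : ι → Matrix n n ℝ) (k : ℕ)
    (X : Matrix n n ℂ) :
    vec ((secondMoment π fun r => (W r).map Complex.ofReal)^[k] X)
      = (∑ r, π r • (W r ⊗ₖ W r)).map Complex.ofReal ^ k *ᵥ vec X := by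
  induction k generalizing X with
  | zero => simp
  | succ k ih =>
    rw [Function.iterate_succ_apply, ih, vec_secondMoment_map_ofReal, mulVec_mulVec, pow_succ]

theorem tendsto_secondMoment_iterate_nhds_zero {π : ι → ℝ} {W : ι → Matrix n n ℝ}
    (hρ : specRad (∑ r, π r • (W r ⊗ₖ W r)) < 1) (X : Matrix n n ℂ) :
    Tendsto (fun k => (secondMoment π fun r => (W r).map Complex.ofReal)^[k] X) atTop (𝓝 0) := by
  have hcont : Continuous fun A : Matrix (n × n) (n × n) ℂ => A *ᵥ vec X :=
    continuous_id.matrix_mulVec continuous_const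
  have hvec := (hcont.tendsto 0).comp (tendsto_pow_atTop_nhds_zero_of_specRad_lt_one hρ)
  simp only [zero_mulVec, Function.comp_def, ← vec_secondMoment_iterate_map_ofReal] at hvec
  exact tendsto_pi_nhds.2 fun i => tendsto_pi_nhds.2 fun j => hvec.apply_nhds (j, i)

end Vectorization

/-- Mean square stability implies stability of the mean dynamics: if
`ρ(Σ_r π_r (W_r ⊗ W_r)) < 1` for a probability vector `π`, then the averaged matrix
`Λ = Σ_r π_r·W_r` is Schur stable, i.e. `ρ(Λ) < 1`. -/
theorem stmt_15 {d q : ℕ} (W : Fin q → Matrix (Fin d) (Fin d) ℝ)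
    (π : Fin q → ℝ) (hπ0 : ∀ r, 0 ≤ π r) (hπ1 : ∑ r, π r = 1)
    (Λ : Matrix (Fin d) (Fin d) ℝ) (hΛ : Λ = ∑ r, π r • W r)
    (hρ : specRad (∑ r, π r • (W r ⊗ₖ W r)) < 1) :
    specRad Λ < 1 := by
  subst hΛ
  set Wc : Fin q → Matrix (Fin d) (Fin d) ℂ := fun r => (W r).map Complex.ofReal
  have hmean : (∑ r, π r • W r).map Complex.ofReal = ∑ r, π r • Wc r := by
    ext i j; simp [Wc, Matrix.sum_apply]
  refine specRad_lt_of_forall_norm_lt one_pos fun μ hμ => ?_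
  by_contra! hμ1
  obtain ⟨v, hv0, hv⟩ := exists_mulVec_eq_smul_of_mem_spectrum hμ
  rw [hmean] at hv
  obtain ⟨i, hi⟩ := Function.ne_iff.mp hv0
  have hlower : ∀ k, ‖v i‖ ^ 2 ≤ ((secondMoment π Wc)^[k] (vecMulVec v (star v)) i i).re := by
    intro k
    have h := mean_pow_conj_le_secondMoment_iterate hπ0 hπ1 Wc k
      (posSemidef_vecMulVec_self_star v).nonneg
    rw [mul_vecMulVec_star_mul_conjTranspose, pow_mulVec_eq_pow_smul hv] at h
    calc ‖v i‖ ^ 2 ≤ ‖μ ^ k * v i‖ ^ 2 := by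
          rw [norm_mul, norm_pow]
          gcongr
          exact le_mul_of_one_le_left (norm_nonneg _) (one_le_pow₀ hμ1)
      _ = (vecMulVec (μ ^ k • v) (star (μ ^ k • v)) i i).re := by
          rw [vecMulVec_apply, Pi.star_apply, Complex.star_def, Complex.mul_conj', Pi.smul_apply,
            smul_eq_mul, ← Complex.ofReal_pow, Complex.ofReal_re]
      _ ≤ _ := (Complex.le_def.mp (sub_nonneg.mp ((le_iff.mp h).diag_nonneg (i := i)))).1
  have hzero := Complex.continuous_re.continuousAt.tendsto.comp
    (((tendsto_secondMoment_iterate_nhds_zero hρ (vecMulVec v (star v))).apply_nhds i).apply_nhds i)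
  exact hi (by simpa using ge_of_tendsto' hzero hlower)
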